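/- Let A = {L_0, L_1, …, L_n} be a line arrangement in ℙ²(ℂ) with L_0, L_1, L_2 passing through a common point O, such that every point of multiplicity at least 3 in A lies on L_0 ∪ L_1 ∪ L_2. Let λ_0, …, λ_n ∈ ℂ* with λ_0 ⋯ λ_n = 1 define a rank one local system, with normalized residues a_0, …, a_n, and define m_1, m_2, P_1, P_2 and Y_q as in the context. Assume that one of the following conditions holds: (i) P_1 = ∅; (ii) P_2 = ∅; (iii) for each point q ≠ O on L_0 of multiplicity at least 3 in A, either (a) both P_1 \ Y_q and P_2 \ Y_q are non-empty, or (b) there exist i ≠ j in {1,2}, a point p_i ∈ P_i \ Y_q and a point p_j ∈ P_j such that the projective line determined by p_i and p_j does not belong to A. Then the local system is admissible. -/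

import Mathlib

/-!
Add the integers `m₁ + m₂`, `-m₁`, `-m₂` to the normalized residues of `L₀`, `L₁`, `L₂`; this
changes neither the monodromy nor the total sum. For `p ≠ O` on `L₁` the new `a(p)` is
`a(p) - m₁`, a positive integer only if `b(p)` is a positive integer larger than `m₁`; likewise on
`L₂`. At `O` nothing changes, and `b(O) ≤ 0` because the residues sum to `0` and those off `L₀`
have real part in `[0, 1)`.

The new residue of `L₀`, and the points `q ≠ O` of `L₀`, need `m₁ + m₂ + b(q) < 1`. Write
`mᵢ = b(pᵢ)` for extremal points `pᵢ`. The lines through `p₁`, `p₂`, `q` cover every line at most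
twice, and since two distinct points share at most one line, the hypotheses on `q` leave at most
one line covered twice. So `m₁ + m₂ + b(q)` is the sum over the covered lines, which is `≤ 0`,
plus one real part `< 1`.
-/

noncomputable section

open Finset Complex

attribute [local instance] Classical.propDecidable

/-- The complex projective plane ℙ²(ℂ). -/
abbrev PP : Type := Projectivization ℂ (Fin 3 → ℂ)

/-- A projective line in ℙ²(ℂ), given as a nonzero linear form up to scalar. -/
abbrev PLine : Type := Projectivization ℂ (Module.Dual ℂ (Fin 3 → ℂ))

/-- Membership of a point on a projective line. -/
def memL (p : PP) (L : PLine) : Prop := L.rep p.rep = 0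

/-- A point has multiplicity at least 3 in the arrangement `L`. -/
def multGe3 {N : ℕ} (L : Fin N → PLine) (p : PP) : Prop :=
  3 ≤ (Finset.univ.filter fun j => memL p (L j)).card

/-- The strictly positive integers, inside ℂ. -/
def PosIntC : Set ℂ := {z | ∃ m : ℤ, 0 < m ∧ z = (m : ℂ)}

/-- The strictly positive integers, inside ℝ. -/
def PosIntR : Set ℝ := {x | ∃ m : ℤ, 0 < m ∧ x = (m : ℝ)}

/-- `a(p)`: the sum of residues over lines through `p`. -/
def aSum {N : ℕ} (L : Fin N → PLine) (a : Fin N → ℂ) (p : PP) : ℂ :=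
  ∑ j ∈ Finset.univ.filter (fun j => memL p (L j)), a j

/-- Admissibility of the rank one local system with monodromies `lam`. -/
def Admissible {N : ℕ} (L : Fin N → PLine) (lam : Fin N → ℂˣ) : Prop :=
  ∃ a : Fin N → ℂ,
    (∀ j, Complex.exp (2 * (Real.pi : ℂ) * Complex.I * a j) = (lam j : ℂ)) ∧
    (∑ j, a j = 0) ∧
    (∀ j, a j ∉ PosIntC) ∧
    (∀ p : PP, multGe3 L p → aSum L a p ∉ PosIntC)

open Module in
theorem card_add_card_le_finrank_of_dual_apply_eq_zero {K V ι κ : Type*} [Field K]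
    [AddCommGroup V] [Module K V] [FiniteDimensional K V] [Fintype ι] [Fintype κ]
    {u : ι → V} {f : κ → Dual K V} (hu : LinearIndependent K u) (hf : LinearIndependent K f)
    (h : ∀ i k, f k (u i) = 0) :
    Fintype.card ι + Fintype.card κ ≤ finrank K V := by
  set W := Submodule.span K (Set.range u)
  have hfW : Submodule.span K (Set.range f) ≤ W.dualAnnihilator := by
    rw [Submodule.span_le]
    rintro _ ⟨k, rfl⟩
    rw [SetLike.mem_coe, Submodule.mem_dualAnnihilator]
    intro w hw
    refine (Submodule.span_le (p := LinearMap.ker (f k))).mpr ?_ hw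
    rintro _ ⟨i, rfl⟩
    exact h i k
  rw [← Subspace.finrank_add_finrank_dualAnnihilator_eq W, finrank_span_eq_card hu,
    ← finrank_span_eq_card hf]
  exact Nat.add_le_add_left (Submodule.finrank_mono hfW) _

open Projectivization in
theorem eq_or_eq_of_memL {x y : PP} {M M' : PLine} (hx : memL x M) (hy : memL y M)
    (hx' : memL x M') (hy' : memL y M') : x = y ∨ M = M' := by
  by_contra! hne
  have key := card_add_card_le_finrank_of_dual_apply_eq_zero
    (independent_iff.mp ((independent_pair_iff_ne x y).mpr hne.1))
    (independent_iff.mp ((independent_pair_iff_ne M M').mpr hne.2))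
    (by simpa [Fin.forall_fin_two] using ⟨⟨hx, hx'⟩, hy, hy'⟩)
  simp at key

theorem not_memL_of_ne {O p : PP} {M M' : PLine} (hM : M ≠ M') (hO : memL O M) (hO' : memL O M')
    (hp : memL p M) (hpO : p ≠ O) : ¬ memL p M' :=
  fun hp' => hpO ((eq_or_eq_of_memL hp hO hp' hO').resolve_right hM)

section Arrangement

variable {N : ℕ} {L : Fin N → PLine}

def linesThrough (L : Fin N → PLine) (p : PP) : Finset (Fin N) :=
  Finset.univ.filter fun j => memL p (L j)

@[simp]
theorem mem_linesThrough {p : PP} {j : Fin N} : j ∈ linesThrough L p ↔ memL p (L j) := by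
  simp [linesThrough]

theorem re_aSum (L : Fin N → PLine) (a : Fin N → ℂ) (p : PP) :
    (aSum L a p).re = ∑ j ∈ linesThrough L p, (a j).re :=
  Complex.re_sum _ _

theorem disjoint_linesThrough_iff {x y : PP} :
    Disjoint (linesThrough L x) (linesThrough L y) ↔ ∀ k, ¬ (memL x (L k) ∧ memL y (L k)) := by
  simp [Finset.disjoint_left]

theorem card_linesThrough_inter_le_one (hL : Function.Injective L) {x y : PP} (hxy : x ≠ y) :
    #(linesThrough L x ∩ linesThrough L y) ≤ 1 := by
  refine Finset.card_le_one.mpr fun i hi j hj => hL ?_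
  simp only [Finset.mem_inter, mem_linesThrough] at hi hj
  exact (eq_or_eq_of_memL hi.1 hi.2 hj.1 hj.2).resolve_left hxy

def unionLinesThrough (L : Fin N → PLine) (q : PP) : Set PP :=
  {x | ∃ k, memL q (L k) ∧ memL x (L k)}

theorem notMem_unionLinesThrough_iff {q x : PP} :
    x ∉ unionLinesThrough L q ↔ Disjoint (linesThrough L x) (linesThrough L q) := by
  simp [unionLinesThrough, disjoint_linesThrough_iff, and_comm]

/-- `∅` stands in for the lines through an extremal point when there is none (and `m = 0`). -/
def lineSets (L : Fin N → PLine) (P : Set PP) : Set (Finset (Fin N)) :=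
  insert ∅ (linesThrough L '' P)

theorem card_inter_le_one_of_mem_lineSets (hL : Function.Injective L) {P₁ P₂ : Set PP}
    (hP : Disjoint P₁ P₂) {T₁ T₂ : Finset (Fin N)} (h₁ : T₁ ∈ lineSets L P₁)
    (h₂ : T₂ ∈ lineSets L P₂) : #(T₁ ∩ T₂) ≤ 1 := by
  obtain rfl | ⟨x, hx, rfl⟩ := h₁
  · simp
  obtain rfl | ⟨y, hy, rfl⟩ := h₂
  · simp
  exact card_linesThrough_inter_le_one hL (hP.ne_of_mem hx hy)

end Arrangement

theorem sum_lt_one_of_card_le_one {ι : Type*} {b : ι → ℝ} {s : Finset ι} (hs : #s ≤ 1)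
    (h : ∀ j ∈ s, b j < 1) : ∑ j ∈ s, b j < 1 := by
  rcases Nat.le_one_iff_eq_zero_or_eq_one.mp hs with hs | hs
  · simp [Finset.card_eq_zero.mp hs]
  · obtain ⟨x, rfl⟩ := Finset.card_eq_one.mp hs
    simpa using h x (Finset.mem_singleton_self x)

section Residues

variable {ι : Type*} [Fintype ι] {b : ι → ℝ} {i₀ : ι}

theorem sum_nonpos_of_mem (hb : ∑ j, b j = 0) (hb01 : ∀ j, j ≠ i₀ → b j ∈ Set.Ico 0 1)
    {U : Finset ι} (hU : i₀ ∈ U) : ∑ j ∈ U, b j ≤ 0 := by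
  have hUc : 0 ≤ ∑ j ∈ Uᶜ, b j :=
    Finset.sum_nonneg fun j hj => (hb01 j (by rintro rfl; exact Finset.mem_compl.mp hj hU)).1
  linarith [Finset.sum_add_sum_compl U b]

/-- Counted with multiplicity, `T₁`, `T₂` and `U` cover `T₁ ∪ T₂ ∪ U`, whose sum is `≤ 0`, and
at most one index of `T₂` a second time, whose term is `< 1`. -/
theorem sum_add_sum_add_sum_lt_one [DecidableEq ι] (hb : ∑ j, b j = 0)
    (hb01 : ∀ j, j ≠ i₀ → b j ∈ Set.Ico 0 1)
    {U T₁ T₂ : Finset ι} (hU : i₀ ∈ U) (hT₂ : i₀ ∉ T₂) (hT₁U : Disjoint T₁ U)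
    (hE : Disjoint T₂ U ∧ #(T₁ ∩ T₂) ≤ 1 ∨ Disjoint T₁ T₂ ∧ #(T₂ ∩ U) ≤ 1) :
    ∑ j ∈ T₁, b j + ∑ j ∈ T₂, b j + ∑ j ∈ U, b j < 1 := by
  have hlt : ∀ s ⊆ T₂, #s ≤ 1 → ∑ j ∈ s, b j < 1 := fun s hs hcard =>
    sum_lt_one_of_card_le_one hcard fun j hj => (hb01 j (ne_of_mem_of_not_mem (hs hj) hT₂)).2
  have hunion : ∑ j ∈ T₁ ∪ T₂ ∪ U, b j ≤ 0 :=
    sum_nonpos_of_mem hb hb01 (Finset.mem_union_right _ hU)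
  have hinter : (T₁ ∪ T₂) ∩ U = T₂ ∩ U := by
    rw [Finset.union_inter_distrib_right, Finset.disjoint_iff_inter_eq_empty.mp hT₁U,
      Finset.empty_union]
  have h₁₂ := Finset.sum_union_inter (s₁ := T₁) (s₂ := T₂) (f := b)
  have h₁₂U := Finset.sum_union_inter (s₁ := T₁ ∪ T₂) (s₂ := U) (f := b)
  rw [hinter] at h₁₂U
  rcases hE with ⟨hdisj, hcard⟩ | ⟨hdisj, hcard⟩
  · rw [Finset.disjoint_iff_inter_eq_empty.mp hdisj, Finset.sum_empty] at h₁₂U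
    linarith [hlt _ Finset.inter_subset_right hcard]
  · rw [Finset.disjoint_iff_inter_eq_empty.mp hdisj, Finset.sum_empty] at h₁₂
    linarith [hlt _ Finset.inter_subset_left hcard]

end Residues

section Extremal

variable {N : ℕ} {L : Fin N → PLine} {b : Fin N → ℝ} {i₀ : Fin N}

/-- The properties of an extremal value `mᵢ` and its set `Pᵢ` of extremal points used in the
estimates, with `i₀` the index of `L₀`. -/
structure IsExtremalSet (L : Fin N → PLine) (b : Fin N → ℝ) (i₀ : Fin N) (m : ℝ) (P : Set PP) :
    Prop where
  eq_zero_or_nonempty : m = 0 ∨ P.Nonempty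
  not_memL : ∀ x ∈ P, ¬ memL x (L i₀)
  sum_eq : ∀ x ∈ P, ∑ j ∈ linesThrough L x, b j = m

theorem isExtremalSet_of_isGreatest {a : Fin N → ℂ} {O : PP} {i : Fin N} {m : ℝ} {P : Set PP}
    (hoff : ∀ p, p ≠ O → memL p (L i) → ¬ memL p (L i₀))
    (hm : IsGreatest (insert 0 ((fun p => (aSum L a p).re) ''
      {p | p ≠ O ∧ multGe3 L p ∧ memL p (L i) ∧ (aSum L a p).re ∈ PosIntR})) m)
    (hP : P = {p | p ≠ O ∧ multGe3 L p ∧ memL p (L i) ∧ (aSum L a p).re ∈ PosIntR ∧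
      (aSum L a p).re = m}) :
    IsExtremalSet L (fun j => (a j).re) i₀ m P where
  eq_zero_or_nonempty := by
    obtain h | ⟨p, hp, hpm⟩ := hm.1
    · exact Or.inl h
    · exact Or.inr ⟨p, hP ▸ ⟨hp.1, hp.2.1, hp.2.2.1, hp.2.2.2, hpm⟩⟩
  not_memL x hx := by
    subst hP
    exact hoff x hx.1 hx.2.2.1
  sum_eq x hx := by
    subst hP
    rw [← re_aSum]
    exact hx.2.2.2.2

namespace IsExtremalSet

variable {m m₁ m₂ : ℝ} {P P₁ P₂ : Set PP}

theorem eq_zero_of_eq_empty (h : IsExtremalSet L b i₀ m P) (hP : P = ∅) : m = 0 :=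
  h.eq_zero_or_nonempty.resolve_right (by simp [hP])

theorem exists_mem_lineSets (h : IsExtremalSet L b i₀ m P) :
    ∃ T ∈ lineSets L P, i₀ ∉ T ∧ ∑ j ∈ T, b j = m := by
  obtain rfl | ⟨x, hx⟩ := h.eq_zero_or_nonempty
  · exact ⟨∅, Set.mem_insert _ _, Finset.notMem_empty _, Finset.sum_empty⟩
  · exact ⟨linesThrough L x, Set.mem_insert_of_mem _ ⟨x, hx, rfl⟩,
      fun h0 => h.not_memL x hx (mem_linesThrough.mp h0), h.sum_eq x hx⟩

theorem add_sum_lt_one (hL : Function.Injective L) (hb : ∑ j, b j = 0)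
    (hb01 : ∀ j, j ≠ i₀ → b j ∈ Set.Ico 0 1) (h : IsExtremalSet L b i₀ m P) {q : PP}
    (hq : memL q (L i₀)) : m + ∑ j ∈ linesThrough L q, b j < 1 := by
  obtain ⟨T, hT, hi₀T, rfl⟩ := h.exists_mem_lineSets
  have hqP : Disjoint P {q} :=
    Set.disjoint_singleton_right.mpr fun hqP => h.not_memL q hqP hq
  have hcard := card_inter_le_one_of_mem_lineSets hL hqP hT
    (Set.mem_insert_of_mem _ ⟨q, rfl, rfl⟩)
  simpa using sum_add_sum_add_sum_lt_one (T₁ := ∅) hb hb01 (mem_linesThrough.mpr hq) hi₀T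
    (Finset.disjoint_empty_left _) (Or.inr ⟨Finset.disjoint_empty_left _, hcard⟩)

theorem add_add_lt_one (hL : Function.Injective L) (hb : ∑ j, b j = 0)
    (hb01 : ∀ j, j ≠ i₀ → b j ∈ Set.Ico 0 1) (h₁ : IsExtremalSet L b i₀ m₁ P₁)
    (h₂ : IsExtremalSet L b i₀ m₂ P₂) (hP : Disjoint P₁ P₂) : m₁ + m₂ + b i₀ < 1 := by
  obtain ⟨T₁, hT₁, hi₀T₁, rfl⟩ := h₁.exists_mem_lineSets
  obtain ⟨T₂, hT₂, hi₀T₂, rfl⟩ := h₂.exists_mem_lineSets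
  simpa using sum_add_sum_add_sum_lt_one hb hb01 (Finset.mem_singleton_self i₀) hi₀T₂
    (Finset.disjoint_singleton_right.mpr hi₀T₁)
    (Or.inl ⟨Finset.disjoint_singleton_right.mpr hi₀T₂,
      card_inter_le_one_of_mem_lineSets hL hP hT₁ hT₂⟩)

end IsExtremalSet

theorem sum_linesThrough_add_add_lt_one (hL : Function.Injective L) (hb : ∑ j, b j = 0)
    (hb01 : ∀ j, j ≠ i₀ → b j ∈ Set.Ico 0 1) {x y q : PP} (hq : memL q (L i₀))
    (hy : ¬ memL y (L i₀)) (hxq : Disjoint (linesThrough L x) (linesThrough L q))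
    (hxy : Disjoint (linesThrough L y) (linesThrough L q) ∧ x ≠ y ∨
      Disjoint (linesThrough L x) (linesThrough L y)) :
    ∑ j ∈ linesThrough L x, b j + ∑ j ∈ linesThrough L y, b j +
      ∑ j ∈ linesThrough L q, b j < 1 := by
  refine sum_add_sum_add_sum_lt_one hb hb01 (mem_linesThrough.mpr hq)
    (fun h => hy (mem_linesThrough.mp h)) hxq ?_
  rcases hxy with ⟨hyq, hxy⟩ | hxy
  · exact Or.inl ⟨hyq, card_linesThrough_inter_le_one hL hxy⟩
  · exact Or.inr ⟨hxy, card_linesThrough_inter_le_one hL fun h => hy (h ▸ hq)⟩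

theorem IsExtremalSet.add_add_sum_lt_one {m₁ m₂ : ℝ} {P₁ P₂ : Set PP}
    (hL : Function.Injective L) (hb : ∑ j, b j = 0) (hb01 : ∀ j, j ≠ i₀ → b j ∈ Set.Ico 0 1)
    (h₁ : IsExtremalSet L b i₀ m₁ P₁) (h₂ : IsExtremalSet L b i₀ m₂ P₂) (hP : Disjoint P₁ P₂)
    {q : PP} (hq : memL q (L i₀))
    (hcond : P₁ = ∅ ∨ P₂ = ∅ ∨
      ((P₁ \ unionLinesThrough L q).Nonempty ∧ (P₂ \ unionLinesThrough L q).Nonempty) ∨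
      (∃ x ∈ P₁ \ unionLinesThrough L q, ∃ y ∈ P₂, ∀ k, ¬ (memL x (L k) ∧ memL y (L k))) ∨
      (∃ x ∈ P₂ \ unionLinesThrough L q, ∃ y ∈ P₁, ∀ k, ¬ (memL x (L k) ∧ memL y (L k)))) :
    m₁ + m₂ + ∑ j ∈ linesThrough L q, b j < 1 := by
  rcases hcond with hP₁ | hP₂ | ⟨⟨x, hx, hxq⟩, y, hy, hyq⟩ | ⟨x, ⟨hx, hxq⟩, y, hy, hxy⟩ |
      ⟨x, ⟨hx, hxq⟩, y, hy, hxy⟩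
  · simpa [h₁.eq_zero_of_eq_empty hP₁] using h₂.add_sum_lt_one hL hb hb01 hq
  · simpa [h₂.eq_zero_of_eq_empty hP₂] using h₁.add_sum_lt_one hL hb hb01 hq
  · have := sum_linesThrough_add_add_lt_one hL hb hb01 hq (h₂.not_memL y hy)
      (notMem_unionLinesThrough_iff.mp hxq)
      (Or.inl ⟨notMem_unionLinesThrough_iff.mp hyq, hP.ne_of_mem hx hy⟩)
    rwa [h₁.sum_eq x hx, h₂.sum_eq y hy] at this
  · have := sum_linesThrough_add_add_lt_one hL hb hb01 hq (h₂.not_memL y hy)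
      (notMem_unionLinesThrough_iff.mp hxq) (Or.inr (disjoint_linesThrough_iff.mpr hxy))
    rwa [h₁.sum_eq x hx, h₂.sum_eq y hy] at this
  · have := sum_linesThrough_add_add_lt_one hL hb hb01 hq (h₁.not_memL y hy)
      (notMem_unionLinesThrough_iff.mp hxq) (Or.inr (disjoint_linesThrough_iff.mpr hxy))
    rw [h₂.sum_eq x hx, h₁.sum_eq y hy] at this
    linarith

end Extremal


theorem notMem_PosIntC_of_re_lt_one {z : ℂ} (hz : z.re < 1) : z ∉ PosIntC := by
  rintro ⟨k, hk, rfl⟩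
  have hk1 : (k : ℝ) < 1 := by simpa using hz
  have : k < 1 := by exact_mod_cast hk1
  omega

theorem aSum_sub_intCast_notMem_PosIntC {N : ℕ} {L : Fin N → PLine} {a : Fin N → ℂ}
    {S : Set PP} {M : ℤ} (hm : IsGreatest (insert 0 ((fun p => (aSum L a p).re) '' S)) M)
    {p : PP} (hp : (aSum L a p).re ∈ PosIntR → p ∈ S) : aSum L a p - M ∉ PosIntC := by
  rintro ⟨k, hk, hz⟩
  have hM : 0 ≤ M := by exact_mod_cast hm.2 (Set.mem_insert 0 _)
  have hre : (aSum L a p).re = ((k + M : ℤ) : ℝ) := by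
    rw [sub_eq_iff_eq_add.mp hz]
    simp
  have hle : (aSum L a p).re ≤ M :=
    hm.2 (Set.mem_insert_of_mem _ ⟨p, hp ⟨k + M, by omega, hre⟩, rfl⟩)
  rw [hre, Int.cast_le] at hle
  omega

theorem exists_intCast_of_mem_insert_zero {α : Type*} {f : α → ℝ} {S : Set α} {m : ℝ}
    (hm : m ∈ insert 0 (f '' S)) (hS : ∀ p ∈ S, f p ∈ PosIntR) : ∃ M : ℤ, 0 ≤ M ∧ (M : ℝ) = m := by
  obtain rfl | ⟨p, hp, rfl⟩ := hm
  · exact ⟨0, le_rfl, Int.cast_zero⟩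
  · obtain ⟨k, hk, hpk⟩ := hS p hp
    exact ⟨k, hk.le, hpk.symm⟩

theorem admissible_of_intCast_add {N : ℕ} {L : Fin N → PLine} {lam : Fin N → ℂˣ}
    {a : Fin N → ℂ} (haexp : ∀ j, Complex.exp (2 * (Real.pi : ℂ) * Complex.I * a j) = lam j)
    (hasum : ∑ j, a j = 0) {c : Fin N → ℤ} (hc : ∑ j, c j = 0)
    (hres : ∀ j, a j + c j ∉ PosIntC)
    (hpts : ∀ p, multGe3 L p → aSum L (fun j => a j + c j) p ∉ PosIntC) : Admissible L lam := by
  refine ⟨fun j => a j + c j, fun j => ?_, ?_, hres, hpts⟩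
  · rw [mul_add, Complex.exp_add, haexp, mul_comm _ (c j : ℂ), Complex.exp_int_mul_two_pi_mul_I,
      mul_one]
  · rw [Finset.sum_add_distrib, hasum, ← Int.cast_sum, hc, Int.cast_zero, zero_add]

section Shift

variable {ι : Type*} [DecidableEq ι] {i₀ i₁ i₂ : ι} {M₁ M₂ : ℤ}

def integerShift (i₀ i₁ i₂ : ι) (M₁ M₂ : ℤ) : ι → ℤ :=
  Pi.single i₀ (M₁ + M₂) - Pi.single i₁ M₁ - Pi.single i₂ M₂

theorem sum_integerShift (s : Finset ι) :
    ∑ j ∈ s, integerShift i₀ i₁ i₂ M₁ M₂ j =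
      (if i₀ ∈ s then M₁ + M₂ else 0) - (if i₁ ∈ s then M₁ else 0) -
        (if i₂ ∈ s then M₂ else 0) := by
  simp [integerShift, Finset.sum_sub_distrib, Finset.sum_pi_single']

theorem add_integerShift_lt_one {b : ι → ℝ} (hb01 : ∀ j, j ≠ i₀ → b j ∈ Set.Ico 0 1)
    (hM₁ : 0 ≤ M₁) (hM₂ : 0 ≤ M₂) (h₁ : i₁ ≠ i₀) (h₂ : i₂ ≠ i₀) (h₀ : M₁ + M₂ + b i₀ < 1)
    (j : ι) : b j + integerShift i₀ i₁ i₂ M₁ M₂ j < 1 := by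
  by_cases hj : j = i₀
  · subst hj
    simpa [integerShift, h₁.symm, h₂.symm, add_comm] using h₀
  · have hshift : integerShift i₀ i₁ i₂ M₁ M₂ j ≤ 0 := by
      simp only [integerShift, Pi.sub_apply, Pi.single_apply, hj, if_false]
      split_ifs <;> omega
    linarith [(hb01 j hj).2, (Int.cast_nonpos (R := ℝ)).mpr hshift]

theorem aSum_integerShift {N : ℕ} (L : Fin N → PLine) (a : Fin N → ℂ) {i₀ i₁ i₂ : Fin N}
    (p : PP) :
    aSum L (fun j => a j + integerShift i₀ i₁ i₂ M₁ M₂ j) p = aSum L a p +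
      (((if memL p (L i₀) then M₁ + M₂ else 0) - (if memL p (L i₁) then M₁ else 0) -
        (if memL p (L i₂) then M₂ else 0) : ℤ) : ℂ) := by
  simp only [aSum, Finset.sum_add_distrib, ← Int.cast_sum]
  rw [← linesThrough, sum_integerShift]
  simp

end Shift

theorem admissible_of_classC3_concurrent_general {n : ℕ} (L : Fin (n + 3) → PLine)
    (hdist : Function.Injective L)
    (O : PP) (hO0 : memL O (L 0)) (hO1 : memL O (L 1)) (hO2 : memL O (L 2))
    (hcov : ∀ p : PP, multGe3 L p → memL p (L 0) ∨ memL p (L 1) ∨ memL p (L 2))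
    (lam : Fin (n + 3) → ℂˣ)
    (a : Fin (n + 3) → ℂ)
    (haexp : ∀ j, Complex.exp (2 * (Real.pi : ℂ) * Complex.I * a j) = (lam j : ℂ))
    (hasum : ∑ j, a j = 0)
    (hare : ∀ j, j ≠ 0 → (a j).re ∈ Set.Ico (0 : ℝ) 1)
    (m₁ m₂ : ℝ) (P₁ P₂ : Set PP)
    (hm₁ : IsGreatest (insert (0 : ℝ) ((fun p => (aSum L a p).re) ''
      {p : PP | p ≠ O ∧ multGe3 L p ∧ memL p (L 1) ∧ (aSum L a p).re ∈ PosIntR})) m₁)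
    (hm₂ : IsGreatest (insert (0 : ℝ) ((fun p => (aSum L a p).re) ''
      {p : PP | p ≠ O ∧ multGe3 L p ∧ memL p (L 2) ∧ (aSum L a p).re ∈ PosIntR})) m₂)
    (hP₁ : P₁ = {p : PP | p ≠ O ∧ multGe3 L p ∧ memL p (L 1) ∧ (aSum L a p).re ∈ PosIntR ∧
      (aSum L a p).re = m₁})
    (hP₂ : P₂ = {p : PP | p ≠ O ∧ multGe3 L p ∧ memL p (L 2) ∧ (aSum L a p).re ∈ PosIntR ∧
      (aSum L a p).re = m₂})
    (hcond : P₁ = ∅ ∨ P₂ = ∅ ∨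
      (∀ q : PP, q ≠ O → multGe3 L q → memL q (L 0) →
        -- Y_q is the set {x | ∃ k, memL q (L k) ∧ memL x (L k)}
        (((P₁ \ {x : PP | ∃ k, memL q (L k) ∧ memL x (L k)}).Nonempty ∧
          (P₂ \ {x : PP | ∃ k, memL q (L k) ∧ memL x (L k)}).Nonempty) ∨
         (∃ x ∈ P₁ \ {x : PP | ∃ k, memL q (L k) ∧ memL x (L k)}, ∃ y ∈ P₂,
            ∀ k, ¬ (memL x (L k) ∧ memL y (L k))) ∨
         (∃ x ∈ P₂ \ {x : PP | ∃ k, memL q (L k) ∧ memL x (L k)}, ∃ y ∈ P₁,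
            ∀ k, ¬ (memL x (L k) ∧ memL y (L k)))))) :
    Admissible L lam := by
  have hb : ∑ j, (a j).re = 0 := by rw [← Complex.re_sum, hasum, Complex.zero_re]
  have h₁₀ : (1 : Fin (n + 3)) ≠ 0 := by simp
  have h₂₀ : (2 : Fin (n + 3)) ≠ 0 := by simp [Fin.ext_iff, Nat.mod_eq_of_lt (by omega : 2 < n + 3)]
  have hL₁₀ := hdist.ne h₁₀
  have hL₂₀ := hdist.ne h₂₀
  have hL₁₂ : L 1 ≠ L 2 :=
    hdist.ne (by simp [Fin.ext_iff, Nat.mod_eq_of_lt (by omega : 2 < n + 3)])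
  obtain ⟨M₁, hM₁, rfl⟩ := exists_intCast_of_mem_insert_zero hm₁.1 fun p hp => hp.2.2.2
  obtain ⟨M₂, hM₂, rfl⟩ := exists_intCast_of_mem_insert_zero hm₂.1 fun p hp => hp.2.2.2
  have h₁ := isExtremalSet_of_isGreatest (i₀ := 0)
    (fun p hpO hp => not_memL_of_ne hL₁₀ hO1 hO0 hp hpO) hm₁ hP₁
  have h₂ := isExtremalSet_of_isGreatest (i₀ := 0)
    (fun p hpO hp => not_memL_of_ne hL₂₀ hO2 hO0 hp hpO) hm₂ hP₂
  have hP : Disjoint P₁ P₂ := hP₁ ▸ hP₂ ▸ Set.disjoint_left.mpr fun x hx₁ hx₂ =>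
    not_memL_of_ne hL₁₂ hO1 hO2 hx₁.2.2.1 hx₁.1 hx₂.2.2.1
  refine admissible_of_intCast_add haexp hasum (c := integerShift 0 1 2 M₁ M₂)
    (by simp [sum_integerShift]) (fun j => notMem_PosIntC_of_re_lt_one ?_) (fun p hp => ?_)
  · simpa using add_integerShift_lt_one hare hM₁ hM₂ h₁₀ h₂₀
      (h₁.add_add_lt_one hdist hb hare h₂ hP) j
  rw [aSum_integerShift]
  by_cases hpO : p = O
  · subst hpO
    simp only [hO0, hO1, hO2, if_true, sub_sub, sub_self, Int.cast_zero, add_zero]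
    exact notMem_PosIntC_of_re_lt_one
      ((re_aSum L a p ▸ sum_nonpos_of_mem hb hare (mem_linesThrough.mpr hO0)).trans_lt one_pos)
  rcases hcov p hp with h0 | h1 | h2
  · simp only [h0, not_memL_of_ne hL₁₀.symm hO0 hO1 h0 hpO,
      not_memL_of_ne hL₂₀.symm hO0 hO2 h0 hpO, if_true, if_false, sub_zero]
    refine notMem_PosIntC_of_re_lt_one ?_
    have := h₁.add_add_sum_lt_one hdist hb hare h₂ hP h0
      (hcond.imp_right (Or.imp_right fun h => h p hpO hp h0))
    simp only [Complex.add_re, re_aSum, Complex.intCast_re, Int.cast_add]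
    linarith
  · simpa [h1, not_memL_of_ne hL₁₀ hO1 hO0 h1 hpO, not_memL_of_ne hL₁₂ hO1 hO2 h1 hpO,
      ← sub_eq_add_neg] using aSum_sub_intCast_notMem_PosIntC hm₁ fun hz => ⟨hpO, hp, h1, hz⟩
  · simpa [h2, not_memL_of_ne hL₂₀ hO2 hO0 h2 hpO, not_memL_of_ne hL₁₂.symm hO2 hO1 h2 hpO,
      ← sub_eq_add_neg] using aSum_sub_intCast_notMem_PosIntC hm₂ fun hz => ⟨hpO, hp, h2, hz⟩

/-- Proposition for arrangements of type `C₃` with the three distinguished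
lines `L 0, L 1, L 2` concurrent at `O` and containing all points of multiplicity at least 3.
Given normalized residues `a`, for `i = 1, 2` let `mᵢ` be the maximum of
`b p = Re (a(p))` over the points `p ≠ O` of multiplicity at least 3 on `L i` with
`b p ∈ ℤ_{>0}` (and `mᵢ = 0` if there are none; this is encoded by `mᵢ` being the greatest
element of the corresponding set of values together with `0`), and let `Pᵢ` be the set of such
extremal points with `b p = mᵢ`.  If (i) `P₁ = ∅`, or (ii) `P₂ = ∅`, or (iii) for every point
`q ≠ O` of multiplicity at least 3 on `L 0`, either (a) both `P₁ \ Y_q` and `P₂ \ Y_q` are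
non-empty (`Y_q` being the union of the lines of the arrangement through `q`), or (b) there are
`i ≠ j` in `{1,2}`, `pᵢ ∈ Pᵢ \ Y_q` and `pⱼ ∈ Pⱼ` such that the line determined by `pᵢ` and
`pⱼ` is not a line of the arrangement, then the local system is admissible. -/
theorem admissible_of_classC3_concurrent {n : ℕ} (L : Fin (n + 3) → PLine)
    (hdist : Function.Injective L)
    (O : PP) (hO0 : memL O (L 0)) (hO1 : memL O (L 1)) (hO2 : memL O (L 2))
    (hcov : ∀ p : PP, multGe3 L p → memL p (L 0) ∨ memL p (L 1) ∨ memL p (L 2))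
    (lam : Fin (n + 3) → ℂˣ) (hlam : ∏ j, lam j = 1)
    (a : Fin (n + 3) → ℂ)
    (haexp : ∀ j, Complex.exp (2 * (Real.pi : ℂ) * Complex.I * a j) = (lam j : ℂ))
    (hasum : ∑ j, a j = 0)
    (hare : ∀ j, j ≠ 0 → (a j).re ∈ Set.Ico (0 : ℝ) 1)
    (m₁ m₂ : ℝ) (P₁ P₂ : Set PP)
    (hm₁ : IsGreatest (insert (0 : ℝ) ((fun p => (aSum L a p).re) ''
      {p : PP | p ≠ O ∧ multGe3 L p ∧ memL p (L 1) ∧ (aSum L a p).re ∈ PosIntR})) m₁)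
    (hm₂ : IsGreatest (insert (0 : ℝ) ((fun p => (aSum L a p).re) ''
      {p : PP | p ≠ O ∧ multGe3 L p ∧ memL p (L 2) ∧ (aSum L a p).re ∈ PosIntR})) m₂)
    (hP₁ : P₁ = {p : PP | p ≠ O ∧ multGe3 L p ∧ memL p (L 1) ∧ (aSum L a p).re ∈ PosIntR ∧
      (aSum L a p).re = m₁})
    (hP₂ : P₂ = {p : PP | p ≠ O ∧ multGe3 L p ∧ memL p (L 2) ∧ (aSum L a p).re ∈ PosIntR ∧
      (aSum L a p).re = m₂})
    (hcond : P₁ = ∅ ∨ P₂ = ∅ ∨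
      (∀ q : PP, q ≠ O → multGe3 L q → memL q (L 0) →
        -- Y_q is the set {x | ∃ k, memL q (L k) ∧ memL x (L k)}
        (((P₁ \ {x : PP | ∃ k, memL q (L k) ∧ memL x (L k)}).Nonempty ∧
          (P₂ \ {x : PP | ∃ k, memL q (L k) ∧ memL x (L k)}).Nonempty) ∨
         (∃ x ∈ P₁ \ {x : PP | ∃ k, memL q (L k) ∧ memL x (L k)}, ∃ y ∈ P₂,
            ∀ k, ¬ (memL x (L k) ∧ memL y (L k))) ∨
         (∃ x ∈ P₂ \ {x : PP | ∃ k, memL q (L k) ∧ memL x (L k)}, ∃ y ∈ P₁,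
            ∀ k, ¬ (memL x (L k) ∧ memL y (L k)))))) :
    Admissible L lam :=
  admissible_of_classC3_concurrent_general L hdist O hO0 hO1 hO2 hcov lam a haexp hasum hare m₁ m₂
    P₁ P₂ hm₁ hm₂ hP₁ hP₂ hcond
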